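/- Suppose that rcr(K_n)/C(n,4) converges to a real number q̄ as n → ∞. Let (n_k) and (r_k) be sequences of positive integers with n_k → ∞, r_k → ∞, and r_k dividing n_k for every k. Then rcr(K_{n_k}^{r_k}) / C(n_k,4) → q̄ as k → ∞. -/

import Mathlib

/-- A rectilinear drawing: an injective map of the vertices into the plane
with no three vertex images collinear. -/
def IsRectilinearDrawing {V : Type*} (f : V → ℝ × ℝ) : Prop :=
  Function.Injective f ∧
    ∀ a b c : V, a ≠ b → a ≠ c → b ≠ c →
      ¬ Collinear ℝ ({f a, f b, f c} : Set (ℝ × ℝ))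

/-- The open straight-line segment joining the images of the endpoints of an edge. -/
def edgeSeg {V : Type*} (f : V → ℝ × ℝ) : Sym2 V → Set (ℝ × ℝ) :=
  Sym2.lift ⟨fun a b => openSegment ℝ (f a) (f b), fun a b => openSegment_symm ℝ (f a) (f b)⟩

/-- Two edges (with disjoint vertex sets) cross if their open segments meet. -/
def EdgesCross {V : Type*} (f : V → ℝ × ℝ) (e₁ e₂ : Sym2 V) : Prop :=
  (∀ v, v ∈ e₁ → v ∉ e₂) ∧ (edgeSeg f e₁ ∩ edgeSeg f e₂).Nonempty

lemma edgesCross_symm {V : Type*} (f : V → ℝ × ℝ) : Symmetric (EdgesCross f) :=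
  fun _ _ h => ⟨fun v hv hv' => h.1 v hv' hv, by rw [Set.inter_comm]; exact h.2⟩

/-- The crossing number of a drawing: the number of unordered pairs of edges of `G`
that cross in the drawing. -/
noncomputable def crossingNumber {V : Type*} (G : SimpleGraph V) (f : V → ℝ × ℝ) : ℕ :=
  Set.ncard {p : Sym2 (Sym2 V) |
    (∀ e ∈ p, e ∈ G.edgeSet) ∧ p ∈ Sym2.fromRel (r := EdgesCross f) ⟨by intro a b h; exact edgesCross_symm f h⟩}

/-- The rectilinear crossing number of a graph. -/
noncomputable def rcr {V : Type*} (G : SimpleGraph V) : ℕ :=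
  sInf {k | ∃ f : V → ℝ × ℝ, IsRectilinearDrawing f ∧ crossingNumber G f = k}

/-- The complete balanced `r`-partite graph with `r` parts of size `m`. -/
def completeBalanced (r m : ℕ) : SimpleGraph (Fin r × Fin m) :=
  SimpleGraph.comap Prod.fst ⊤

instance (r m : ℕ) : DecidableRel (completeBalanced r m).Adj :=
  fun u v => inferInstanceAs (Decidable (u.1 ≠ v.1))

/-- The balanced layered graph with `r` layers of size `m`: all edges between
consecutive layers. -/
def layeredGraph (r m : ℕ) : SimpleGraph (Fin r × Fin m) where
  Adj u v := u.1.1 + 1 = v.1.1 ∨ v.1.1 + 1 = u.1.1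
  symm := ⟨by intro _ _ h; exact h.symm⟩
  loopless := ⟨by intro u h; cases h <;> omega⟩

instance (r m : ℕ) : DecidableRel (layeredGraph r m).Adj :=
  fun u v => inferInstanceAs (Decidable (u.1.1 + 1 = v.1.1 ∨ v.1.1 + 1 = u.1.1))

/-- The `s`-fold blow-up of a graph `G`. -/
def blowup {V : Type*} (G : SimpleGraph V) (s : ℕ) : SimpleGraph (V × Fin s) :=
  SimpleGraph.comap Prod.fst G

/-!
A complete balanced `r`-partite graph with parts of size `m` is a subgraph of `K_{rm}`, so
`rcr(K_{rm}^r) ≤ rcr(K_{rm})`. Conversely, fix an optimal drawing of the blow-up of a graph `G`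
by independent sets of size `m`. Each of the `m^|G|` transversals (one vertex per part) carries a
drawing of `G` with at least `rcr(G)` crossings, while a crossing of the blow-up has its four
endpoints in distinct parts and so lies in at most `m^(|G|-4)` transversals. Double counting gives
`m^4 rcr(K_r) ≤ rcr(K_{rm}^r)`. After dividing by `(rm)^4` both bounds become `rcr(K_s)/s^4` for
`s = r` and `s = rm`, which tend to `q̄/24` because `C(s,4) ~ s^4/24`.
-/

open SimpleGraph Function Filter Topology Asymptotics

section Drawings

variable {V W : Type*}

def crossingPairs (G : SimpleGraph V) (f : V → ℝ × ℝ) : Set (Sym2 (Sym2 V)) :=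
  {p | (∀ e ∈ p, e ∈ G.edgeSet) ∧
    p ∈ Sym2.fromRel (r := EdgesCross f) ⟨by intro a b h; exact edgesCross_symm f h⟩}

lemma crossingNumber_eq_ncard (G : SimpleGraph V) (f : V → ℝ × ℝ) :
    crossingNumber G f = (crossingPairs G f).ncard := rfl

@[simp]
lemma mk_mem_crossingPairs {G : SimpleGraph V} {f : V → ℝ × ℝ} {e₁ e₂ : Sym2 V} :
    s(e₁, e₂) ∈ crossingPairs G f ↔
      e₁ ∈ G.edgeSet ∧ e₂ ∈ G.edgeSet ∧ EdgesCross f e₁ e₂ := by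
  simp [crossingPairs, and_assoc]

lemma IsRectilinearDrawing.comp {f : W → ℝ × ℝ} (hf : IsRectilinearDrawing f) {ι : V → W}
    (hι : Injective ι) : IsRectilinearDrawing (f ∘ ι) :=
  ⟨hf.1.comp hι, fun a b c hab hac hbc =>
    hf.2 (ι a) (ι b) (ι c) (hι.ne hab) (hι.ne hac) (hι.ne hbc)⟩

lemma not_collinear_parabola {a b c : ℝ} (hab : a ≠ b) (hac : a ≠ c) (hbc : b ≠ c) :
    ¬ Collinear ℝ ({(a, a ^ 2), (b, b ^ 2), (c, c ^ 2)} : Set (ℝ × ℝ)) := by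
  rw [collinear_iff_of_mem (Set.mem_insert _ _)]
  rintro ⟨v, hv⟩
  obtain ⟨s, hs⟩ := hv (b, b ^ 2) (by simp)
  obtain ⟨t, ht⟩ := hv (c, c ^ 2) (by simp)
  simp only [vadd_eq_add, ← sub_eq_iff_eq_add, Prod.ext_iff, Prod.fst_sub, Prod.snd_sub,
    Prod.smul_fst, Prod.smul_snd, smul_eq_mul] at hs ht
  have hdet : (b - a) * (c - a) * (c - b) = 0 := by
    calc (b - a) * (c - a) * (c - b)
        = (b - a) * (c ^ 2 - a ^ 2) - (c - a) * (b ^ 2 - a ^ 2) := by ring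
      _ = s * v.1 * (t * v.2) - t * v.1 * (s * v.2) := by
          rw [hs.1, hs.2, ht.1, ht.2]
      _ = 0 := by ring
  simp [sub_eq_zero, hab.symm, hac.symm, hbc.symm] at hdet

lemma exists_isRectilinearDrawing (V : Type*) [Finite V] :
    ∃ f : V → ℝ × ℝ, IsRectilinearDrawing f := by
  obtain ⟨n, ⟨e⟩⟩ := Finite.exists_equiv_fin V
  have hx : Injective fun v => ((e v : ℕ) : ℝ) :=
    Nat.cast_injective.comp (Fin.val_injective.comp e.injective)
  refine ⟨fun v => (((e v : ℕ) : ℝ), ((e v : ℕ) : ℝ) ^ 2), fun a b h => hx (congrArg Prod.fst h),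
    fun a b c hab hac hbc => ?_⟩
  exact not_collinear_parabola (hx.ne hab) (hx.ne hac) (hx.ne hbc)

lemma rcr_le_crossingNumber (G : SimpleGraph V) {f : V → ℝ × ℝ} (hf : IsRectilinearDrawing f) :
    rcr G ≤ crossingNumber G f :=
  Nat.sInf_le ⟨f, hf, rfl⟩

lemma exists_crossingNumber_eq_rcr (G : SimpleGraph V) [Finite V] :
    ∃ f : V → ℝ × ℝ, IsRectilinearDrawing f ∧ crossingNumber G f = rcr G := by
  obtain ⟨f, hf⟩ := exists_isRectilinearDrawing V
  exact Nat.sInf_mem (s := {k | ∃ f : V → ℝ × ℝ, IsRectilinearDrawing f ∧ crossingNumber G f = k})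
    ⟨_, f, hf, rfl⟩

lemma edgeSeg_map (f : W → ℝ × ℝ) (ι : V → W) (e : Sym2 V) :
    edgeSeg f (e.map ι) = edgeSeg (f ∘ ι) e := by
  induction e using Sym2.ind with | _ a b => rfl

lemma EdgesCross.map {f : W → ℝ × ℝ} {ι : V → W} (hι : Injective ι) {e₁ e₂ : Sym2 V}
    (h : EdgesCross (f ∘ ι) e₁ e₂) : EdgesCross f (e₁.map ι) (e₂.map ι) := by
  refine ⟨?_, by rw [edgeSeg_map, edgeSeg_map]; exact h.2⟩
  simp only [Sym2.mem_map]
  rintro _ ⟨a, ha, rfl⟩ ⟨b, hb, hba⟩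
  exact h.1 a ha (hι hba ▸ hb)

variable {G : SimpleGraph V} {H : SimpleGraph W}

lemma mapsTo_crossingPairs (φ : G.Copy H) (f : W → ℝ × ℝ) :
    Set.MapsTo (Sym2.map (Sym2.map φ)) (crossingPairs G (f ∘ φ)) (crossingPairs H f) := by
  intro p hp
  induction p using Sym2.ind with | _ e₁ e₂ =>
  obtain ⟨he₁, he₂, hcross⟩ := mk_mem_crossingPairs.1 hp
  rw [Sym2.map_mk, mk_mem_crossingPairs]
  exact ⟨φ.toHom.map_mem_edgeSet he₁, φ.toHom.map_mem_edgeSet he₂, hcross.map φ.injective⟩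

lemma crossingNumber_comp_eq_ncard_image (φ : G.Copy H) (f : W → ℝ × ℝ) :
    crossingNumber G (f ∘ φ) = (Sym2.map (Sym2.map φ) '' crossingPairs G (f ∘ φ)).ncard :=
  (Set.ncard_image_of_injective _ (Sym2.map.injective (Sym2.map.injective φ.injective))).symm

lemma crossingNumber_comp_le [Finite W] (φ : G.Copy H) (f : W → ℝ × ℝ) :
    crossingNumber G (f ∘ φ) ≤ crossingNumber H f := by
  rw [crossingNumber_comp_eq_ncard_image]
  exact Set.ncard_le_ncard (mapsTo_crossingPairs φ f).image_subset (Set.toFinite _)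

lemma rcr_le_of_copy [Finite W] (φ : G.Copy H) : rcr G ≤ rcr H := by
  obtain ⟨f, hf, hcr⟩ := exists_crossingNumber_eq_rcr H
  calc rcr G ≤ crossingNumber G (f ∘ φ) := rcr_le_crossingNumber G (hf.comp φ.injective)
    _ ≤ crossingNumber H f := crossingNumber_comp_le φ f
    _ = rcr H := hcr

lemma exists_card_eq_four_of_mem_crossingPairs [DecidableEq V] {f : V → ℝ × ℝ}
    {p : Sym2 (Sym2 V)} (hp : p ∈ crossingPairs G f) :
    ∃ s : Finset V, s.card = 4 ∧ ∀ v ∈ s, ∃ e ∈ p, v ∈ e := by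
  induction p using Sym2.ind with | _ e₁ e₂ =>
  induction e₁ using Sym2.ind with | _ a b =>
  induction e₂ using Sym2.ind with | _ c d =>
  obtain ⟨hab, hcd, hdisj, -⟩ := mk_mem_crossingPairs.1 hp
  simp only [Sym2.mem_iff, forall_eq_or_imp, forall_eq, not_or] at hdisj
  refine ⟨{a, b, c, d}, ?_, by simp⟩
  rw [Finset.card_insert_of_notMem (by simp [G.ne_of_adj hab, hdisj.1.1, hdisj.1.2]),
    Finset.card_insert_of_notMem (by simp [hdisj.2.1, hdisj.2.2]),
    Finset.card_pair (G.ne_of_adj hcd)]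

lemma rcr_eq_zero_of_card_lt_four [Fintype V] (h : Fintype.card V < 4) : rcr G = 0 := by
  classical
  obtain ⟨f, -, hf⟩ := exists_crossingNumber_eq_rcr G
  rw [← hf, crossingNumber_eq_ncard, Set.ncard_eq_zero]
  refine Set.eq_empty_of_forall_notMem fun p hp => ?_
  obtain ⟨s, hs, -⟩ := exists_card_eq_four_of_mem_crossingPairs hp
  exact h.not_ge (hs ▸ s.card_le_univ)

end Drawings

open Finset in
lemma card_filter_forall_mem_eq {α β : Type*} [Fintype α] [DecidableEq α] [Fintype β]
    [DecidableEq β] (s : Finset α) (c : α → β) :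
    #{t : α → β | ∀ i ∈ s, t i = c i} = Fintype.card β ^ (Fintype.card α - #s) := by
  have hpi : ({t : α → β | ∀ i ∈ s, t i = c i} : Finset (α → β)) =
      Fintype.piFinset fun i => if i ∈ s then {c i} else univ := by
    ext t
    simp only [mem_filter, mem_univ, true_and, Fintype.mem_piFinset]
    refine forall_congr' fun i => ?_
    split_ifs <;> simp [*]
  rw [hpi, Fintype.card_piFinset]
  simp only [apply_ite Finset.card, card_singleton, card_univ]
  rw [prod_ite, prod_const_one, one_mul, prod_const, filter_not, filter_mem_eq_inter, univ_inter,
    card_univ_sdiff]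

section Blowup

variable {V : Type*} (G : SimpleGraph V) {m : ℕ}

def transversalCopy (t : V → Fin m) : G.Copy (blowup G m) :=
  ⟨⟨fun v => (v, t v), fun h => h⟩, fun _ _ h => congrArg Prod.fst h⟩

variable {G}

@[simp]
lemma transversalCopy_apply (t : V → Fin m) (v : V) : transversalCopy G t v = (v, t v) := rfl

lemma map_fst_map_transversalCopy (t : V → Fin m) (p : Sym2 (Sym2 V)) :
    Sym2.map (Sym2.map Prod.fst) (Sym2.map (Sym2.map (transversalCopy G t)) p) = p := by
  simp [Sym2.map_map, Function.comp_def]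

lemma exists_mem_map_transversalCopy_iff {t : V → Fin m} {p : Sym2 (Sym2 V)} {v : V}
    {y : Fin m} :
    (∃ e ∈ Sym2.map (Sym2.map (transversalCopy G t)) p, (v, y) ∈ e) ↔
      (∃ e ∈ p, v ∈ e) ∧ t v = y := by
  simp only [Sym2.mem_map, transversalCopy_apply]
  aesop

lemma ncard_setOf_mem_image_crossingPairs_le [Fintype V] (f : V × Fin m → ℝ × ℝ)
    (P : Sym2 (Sym2 (V × Fin m))) :
    {t : V → Fin m | P ∈ Sym2.map (Sym2.map (transversalCopy G t)) ''
      crossingPairs G (f ∘ transversalCopy G t)}.ncard ≤ m ^ (Fintype.card V - 4) := by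
  classical
  rcases Set.eq_empty_or_nonempty {t : V → Fin m |
      P ∈ Sym2.map (Sym2.map (transversalCopy G t)) '' crossingPairs G (f ∘ transversalCopy G t)}
    with h | ⟨t₀, p₀, hp₀, rfl⟩
  · rw [h, Set.ncard_empty]
    exact Nat.zero_le _
  obtain ⟨s, hs, hsp⟩ := exists_card_eq_four_of_mem_crossingPairs hp₀
  calc _ ≤ (({t : V → Fin m | ∀ i ∈ s, t i = t₀ i} : Finset _) : Set (V → Fin m)).ncard := by
        refine Set.ncard_le_ncard ?_ (Set.toFinite _)
        rintro t ⟨p, -, hp⟩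
        obtain rfl : p = p₀ := by
          simpa only [map_fst_map_transversalCopy] using
            congrArg (Sym2.map (Sym2.map Prod.fst)) hp
        simp only [Finset.coe_filter, Finset.mem_univ, true_and]
        intro i hi
        have hv : ∃ e ∈ Sym2.map (Sym2.map (transversalCopy G t₀)) p, (i, t₀ i) ∈ e :=
          exists_mem_map_transversalCopy_iff.2 ⟨hsp i hi, rfl⟩
        rw [← hp] at hv
        exact (exists_mem_map_transversalCopy_iff.1 hv).2
    _ = m ^ (Fintype.card V - 4) := by
        rw [Set.ncard_coe_finset, card_filter_forall_mem_eq, hs, Fintype.card_fin]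

end Blowup

theorem pow_four_mul_rcr_le_rcr_blowup {V : Type*} [Fintype V] (G : SimpleGraph V) (m : ℕ) :
    m ^ 4 * rcr G ≤ rcr (blowup G m) := by
  classical
  rcases Nat.eq_zero_or_pos m with rfl | hm
  · simp
  by_cases hV : Fintype.card V < 4
  · simp [rcr_eq_zero_of_card_lt_four hV]
  obtain ⟨f, hf, hcr⟩ := exists_crossingNumber_eq_rcr (blowup G m)
  let R (t : V → Fin m) (P : Sym2 (Sym2 (V × Fin m))) : Prop :=
    P ∈ Sym2.map (Sym2.map (transversalCopy G t)) '' crossingPairs G (f ∘ transversalCopy G t)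
  have hcount := Finset.card_mul_le_card_mul R (s := Finset.univ)
    (t := (Set.toFinite (crossingPairs (blowup G m) f)).toFinset)
    (m := rcr G) (n := m ^ (Fintype.card V - 4)) ?above ?below
  case above =>
    intro t _
    calc rcr G ≤ crossingNumber G (f ∘ transversalCopy G t) :=
          rcr_le_crossingNumber G (hf.comp (transversalCopy G t).injective)
      _ = _ := crossingNumber_comp_eq_ncard_image _ _
      _ = _ := by
          rw [← Set.ncard_coe_finset]
          congr 1
          ext P
          simp only [Finset.coe_bipartiteAbove, Set.Finite.mem_toFinset, R]
          exact ⟨fun hP => ⟨(mapsTo_crossingPairs _ f).image_subset hP, hP⟩, And.right⟩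
  case below =>
    intro P _
    rw [← Set.ncard_coe_finset, Finset.coe_bipartiteBelow]
    simp only [Finset.mem_univ, true_and]
    exact ncard_setOf_mem_image_crossingPairs_le f P
  rw [Finset.card_univ, Fintype.card_fun, Fintype.card_fin, ← Set.ncard_eq_toFinset_card,
    ← crossingNumber_eq_ncard, hcr,
    ← Nat.sub_add_cancel (not_lt.1 hV), pow_add, mul_assoc, mul_comm] at hcount
  exact Nat.le_of_mul_le_mul_right hcount (by positivity)

lemma rcr_completeBalanced_le {r n : ℕ} (h : r ∣ n) :
    rcr (completeBalanced r (n / r)) ≤ rcr (⊤ : SimpleGraph (Fin n)) :=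
  rcr_le_of_copy <| (Iso.completeGraph (finProdFinEquiv.trans
    (finCongr (Nat.mul_div_cancel' h)))).toCopy.comp (Copy.ofLE _ _ le_top)

lemma rcr_top_div_pow_le {r n : ℕ} (h : r ∣ n) (hn : n ≠ 0) :
    (rcr (⊤ : SimpleGraph (Fin r)) : ℝ) / (r : ℝ) ^ 4 ≤
      (rcr (completeBalanced r (n / r)) : ℝ) / (n : ℝ) ^ 4 := by
  obtain ⟨m, rfl⟩ := h
  have hr : 0 < r := Nat.pos_of_ne_zero (left_ne_zero_of_mul hn)
  rw [Nat.mul_div_cancel_left m hr, div_le_div_iff₀ (by positivity) (by positivity)]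
  calc (rcr (⊤ : SimpleGraph (Fin r)) : ℝ) * ((r * m : ℕ) : ℝ) ^ 4
      = ((m ^ 4 * rcr (⊤ : SimpleGraph (Fin r)) : ℕ) : ℝ) * (r : ℝ) ^ 4 := by push_cast; ring
    _ ≤ (rcr (completeBalanced r m) : ℝ) * (r : ℝ) ^ 4 := by
      gcongr
      exact pow_four_mul_rcr_le_rcr_blowup _ m

lemma tendsto_div_choose_four_iff {ι : Type*} {l : Filter ι} {n : ι → ℕ}
    (hn : Tendsto n l atTop) {u : ι → ℝ} {a : ℝ} :
    Tendsto (fun i => u i / ((n i).choose 4 : ℕ)) l (𝓝 a) ↔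
      Tendsto (fun i => u i / (n i : ℝ) ^ 4) l (𝓝 (a / 24)) := by
  have hC : (fun i => (((n i).choose 4 : ℕ) : ℝ)) ~[l] fun i => (n i : ℝ) ^ 4 / 24 := by
    simpa [Function.comp_def, Nat.factorial] using (isEquivalent_choose 4).comp_tendsto hn
  refine ((IsEquivalent.refl (u := u)).div hC).tendsto_nhds_iff.trans ?_
  rw [← tendsto_const_smul_iff₀ (f := fun i => u i / (n i : ℝ) ^ 4) (c := (24 : ℝ)) (by norm_num)]
  convert Iff.rfl using 2
  · ext i
    simp only [Pi.div_apply, smul_eq_mul]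
    field_simp
  · simp only [smul_eq_mul]
    field_simp

theorem stmt8_general (q : ℝ)
    (hq : Filter.Tendsto
      (fun n : ℕ => (rcr (⊤ : SimpleGraph (Fin n)) : ℝ) / ((n.choose 4 : ℕ) : ℝ))
      Filter.atTop (nhds q))
    (nk rk : ℕ → ℕ)
    (hn : Filter.Tendsto nk Filter.atTop Filter.atTop)
    (hr : Filter.Tendsto rk Filter.atTop Filter.atTop)
    (hdvd : ∀ k, rk k ∣ nk k) :
    Filter.Tendsto
      (fun k => (rcr (completeBalanced (rk k) (nk k / rk k)) : ℝ) / (((nk k).choose 4 : ℕ) : ℝ))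
      Filter.atTop (nhds q) := by
  have hK : Tendsto (fun n : ℕ => (rcr (⊤ : SimpleGraph (Fin n)) : ℝ) / (n : ℝ) ^ 4) atTop
      (𝓝 (q / 24)) :=
    (tendsto_div_choose_four_iff tendsto_id).1 hq
  rw [tendsto_div_choose_four_iff hn]
  refine tendsto_of_tendsto_of_tendsto_of_le_of_le' (hK.comp hr) (hK.comp hn) ?_
    (Eventually.of_forall fun k => ?_)
  · filter_upwards [hn.eventually_ne_atTop 0] with k hk
    exact rcr_top_div_pow_le (hdvd k) hk
  · exact div_le_div_of_nonneg_right (by exact_mod_cast rcr_completeBalanced_le (hdvd k))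
      (by positivity)

/-- if `rcr(K_n)/C(n,4) → q̄`, then for sequences `n_k → ∞`, `r_k → ∞` with
`r_k ∣ n_k`, one has `rcr(K_{n_k}^{r_k})/C(n_k,4) → q̄`. -/
theorem stmt8 (q : ℝ)
    (hq : Filter.Tendsto
      (fun n : ℕ => (rcr (⊤ : SimpleGraph (Fin n)) : ℝ) / ((n.choose 4 : ℕ) : ℝ))
      Filter.atTop (nhds q))
    (nk rk : ℕ → ℕ) (hnpos : ∀ k, 0 < nk k) (hrpos : ∀ k, 0 < rk k)
    (hn : Filter.Tendsto nk Filter.atTop Filter.atTop)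
    (hr : Filter.Tendsto rk Filter.atTop Filter.atTop)
    (hdvd : ∀ k, rk k ∣ nk k) :
    Filter.Tendsto
      (fun k => (rcr (completeBalanced (rk k) (nk k / rk k)) : ℝ) / (((nk k).choose 4 : ℕ) : ℝ))
      Filter.atTop (nhds q) :=
  stmt8_general q hq nk rk hn hr hdvd
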